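/- For two players with strict weak order preferences ≲₁, ≲₂ on a finite outcome set O, the following are equivalent: (1) (≲₁, ≲₂) is out of pattern for O; (2) there exist strict linear extensions <'₁, <'₂ of ≲₁, ≲₂ that can be layered for O; (3) (≲₁, ≲₂) can be layered for O. -/

import Mathlib

namespace SeqGame

inductive GameTree (N O : Type) : Type where
  | leaf (o : O) : GameTree N O
  | node (i : N) (children : List (GameTree N O)) : GameTree N O

namespace GameTree

variable {N O : Type}

/-- The subtree of `T` at position `p` (a list of child indices), if it exists. -/
def subtree : GameTree N O → List ℕ → Option (GameTree N O)
  | t, [] => some t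
  | leaf _, _ :: _ => none
  | node _ c, k :: p =>
    match getElem? c k with
    | some t => subtree t p
    | none => none

/-- A strategy profile: a choice of a child index at every position. -/
abbrev Profile := List ℕ → ℕ

/-- A profile is legal if it chooses an existing child at every internal node. -/
def Legal (T : GameTree N O) (s : Profile) : Prop :=
  ∀ p i c, T.subtree p = some (node i c) → s p < c.length

/-- The profiles `s` and `s'` differ at the (valid, internal) node `p`. -/
def Differs (T : GameTree N O) (s s' : Profile) (p : List ℕ) : Prop :=
  (∃ i c, T.subtree p = some (node i c)) ∧ s p ≠ s' p

/-- The outcome reached when playing according to the profile `s`. -/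
def outcome : GameTree N O → Profile → Option O
  | leaf o, _ => some o
  | node _ c, s =>
    match h : getElem? c (s []) with
    | some t => outcome t (fun p => s (s [] :: p))
    | none => none
decreasing_by
  have hm : t ∈ c := by
    exact List.mem_of_getElem? h
  have := List.sizeOf_lt_of_mem hm
  simp only [node.sizeOf_spec]
  omega

/-- The profile `s` re-rooted at position `p`. -/
def shift (s : Profile) (p : List ℕ) : Profile := fun q => s (p ++ q)

/-- The owner of the node at position `p`, if it is internal. -/
def ownerAt (T : GameTree N O) (p : List ℕ) : Option N :=
  match T.subtree p with
  | some (node i _) => some i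
  | _ => none

/-- `p` lies along the play induced by `s`. -/
def OnPlay (s : Profile) (p : List ℕ) : Prop :=
  ∀ q k, (q ++ [k]) <+: p → s q = k

/-- Improvement property: every player who changes strictly improves the outcome. -/
def Iprop (T : GameTree N O) (pref : N → O → O → Prop) (s s' : Profile) : Prop :=
  ∀ p i c, T.subtree p = some (node i c) → s p ≠ s' p →
    ∃ x y, T.outcome s = some x ∧ T.outcome s' = some y ∧ pref i x y

/-- Subgame improvement property. -/
def SIprop (T : GameTree N O) (pref : N → O → O → Prop) (s s' : Profile) : Prop :=
  ∀ p i c, T.subtree p = some (node i c) → s p ≠ s' p →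
    ∃ x y, outcome (node i c) (shift s p) = some x ∧
      outcome (node i c) (shift s' p) = some y ∧ pref i x y

/-- Laziness property: all changed nodes lie along the play induced by `s'`. -/
def Lprop (T : GameTree N O) (s s' : Profile) : Prop :=
  ∀ p, Differs T s s' p → OnPlay s' p

/-- One player property: at most one player changes his strategy. -/
def P1prop (T : GameTree N O) (s s' : Profile) : Prop :=
  ∃ i : N, ∀ p, Differs T s s' p → T.ownerAt p = some i

/-- Atomicity property: at most one node changes. -/
def Aprop (T : GameTree N O) (s s' : Profile) : Prop :=
  ∀ p q, Differs T s s' p → Differs T s s' q → p = q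

/-- Names of the update properties. -/
inductive Upd : Type | I | SI | L | P1 | A
deriving DecidableEq

/-- Interpretation of an update property name. -/
def holds (T : GameTree N O) (pref : N → O → O → Prop) : Upd → Profile → Profile → Prop
  | .I => Iprop T pref
  | .SI => SIprop T pref
  | .L => Lprop T
  | .P1 => P1prop T
  | .A => Aprop T

/-- The X-dynamics: an actual update (between legal profiles) satisfying
all properties in `X`. -/
def XDyn (X : Set Upd) (T : GameTree N O) (pref : N → O → O → Prop)
    (s s' : Profile) : Prop :=
  Legal T s ∧ Legal T s' ∧ (∃ p, Differs T s s' p) ∧ ∀ u ∈ X, holds T pref u s s'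

/-- A dynamics terminates iff there is no infinite update sequence. -/
def Terminates (D : Profile → Profile → Prop) : Prop :=
  ¬ ∃ f : ℕ → Profile, ∀ n, D (f n) (f (n + 1))

/-- `s'` is a deviation from `s` by the coalition `I`. -/
def Deviation (T : GameTree N O) (I : Set N) (s s' : Profile) : Prop :=
  Legal T s' ∧ ∀ p i c, T.subtree p = some (node i c) → i ∉ I → s p = s' p

/-- Nash equilibrium. -/
def IsNE (T : GameTree N O) (pref : N → O → O → Prop) (s : Profile) : Prop :=
  ∀ i s', Deviation T {i} s s' →
    ∀ x y, T.outcome s = some x → T.outcome s' = some y → ¬ pref i x y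

/-- Subgame perfect equilibrium: an NE in every subgame. -/
def IsSPE (T : GameTree N O) (pref : N → O → O → Prop) (s : Profile) : Prop :=
  ∀ p t, T.subtree p = some t → IsNE t pref (shift s p)

/-- Strong Nash equilibrium (Aumann). -/
def IsSNE (T : GameTree N O) (pref : N → O → O → Prop) (s : Profile) : Prop :=
  ∀ I : Set N, I.Nonempty → ∀ s', Deviation T I s s' →
    ∃ i ∈ I, ∀ x y, T.outcome s = some x → T.outcome s' = some y → ¬ pref i x y

/-- A relation is acyclic if it has no cycle. -/
def Acyclic (r : O → O → Prop) : Prop := ∀ x, ¬ Relation.TransGen r x x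

/-- Incomparability. -/
def Incomp (r : O → O → Prop) (x y : O) : Prop := ¬ r x y ∧ ¬ r y x

/-- Strict weak order: irreflexive, transitive, with transitive incomparability. -/
def IsSWO (r : O → O → Prop) : Prop :=
  (∀ x, ¬ r x x) ∧ (∀ x y z, r x y → r y z → r x z) ∧
    (∀ x y z, Incomp r x y → Incomp r y z → Incomp r x z)

/-- Strict linear order: irreflexive, transitive and total. -/
def IsSLO (r : O → O → Prop) : Prop :=
  (∀ x, ¬ r x x) ∧ (∀ x y z, r x y → r y z → r x z) ∧
    (∀ x y, x ≠ y → r x y ∨ r y x)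

/-- Absence of the main pattern. -/
def OutOfMainPattern (pref : N → O → O → Prop) : Prop :=
  ∀ (i j : N) (x y z : O),
    ¬ (pref i x y ∧ pref i y z ∧ pref j y z ∧ pref j z x)

/-- Absence of the secondary pattern. -/
def OutOfSecondaryPattern (pref : N → O → O → Prop) : Prop :=
  ∀ (i j : N) (w x y z : O),
    ¬ (pref i w x ∧ pref i x y ∧ pref i y z ∧
       Incomp (pref j) x z ∧ pref j z w ∧ Incomp (pref j) w y)

/-- Absence of both patterns. -/
def OutOfPattern (pref : N → O → O → Prop) : Prop :=
  OutOfMainPattern pref ∧ OutOfSecondaryPattern pref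

/-- The preferences can be layered: there is an ordered partition of the
outcomes (given by a layer-index function) such that higher layers are
unanimously weakly preferred, and within a layer no two players agree on
one pair while disagreeing on another pair. -/
def CanBeLayered (pref : N → O → O → Prop) : Prop :=
  ∃ ℓ : O → ℕ,
    (∀ x y, ℓ x < ℓ y → ∀ i, ¬ pref i y x) ∧
    (∀ (i j : N) (w x y z : O), ℓ w = ℓ x → ℓ x = ℓ y → ℓ y = ℓ z →
      ¬ (pref i x y ∧ pref j x y ∧ pref i w z ∧ pref j z w))

end GameTree
end SeqGame

/-!
Represent each strict weak order by a rank function `ρ i : O → ℕ`.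

A layering rules out both patterns: the outcomes of a pattern are forced into one layer, where
the two players agree on one pair and disagree on another.

Conversely, call `b` reachable from `a` if a chain of steps, each strictly improving for some
player, leads from `a` to `b`. Out of pattern, no such chain leads from `y` to an outcome `x` that
both players rank below `y`: the main pattern squeezes every intermediate outcome of a shortest
such chain onto the horizontal and vertical lines through `x` and `y` (`OnBoundary`), and
following the chain along these lines produces a main or a secondary pattern. So if outcomes are
layered by the number of outcomes strictly below them in reachability, no layer contains a
unanimous pair, and sorting each layer by `ρ 0 - ρ 1` (ties broken arbitrarily) extends player 0's
preference and, reversed, player 1's, while the two extensions are opposite on every layer.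
-/

namespace SeqGame.GameTree

variable {N O : Type}

theorem exists_lt_and_not_succ {P : ℕ → Prop} {a b : ℕ} (hab : a ≤ b) (ha : P a) (hb : ¬ P b) :
    ∃ k, a ≤ k ∧ k < b ∧ P k ∧ ¬ P (k + 1) := by
  induction b, hab using Nat.le_induction with
  | base => exact absurd ha hb
  | succ b hab ih =>
    by_cases hPb : P b
    · exact ⟨b, hab, b.lt_succ_self, hPb, hb⟩
    · obtain ⟨k, hak, hkb, hk⟩ := ih hPb
      exact ⟨k, hak, by omega, hk⟩

section Path

variable {α : Type} {r s : α → α → Prop} {n : ℕ} {f : ℕ → α}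

def IsPath (r : α → α → Prop) (n : ℕ) (f : ℕ → α) : Prop :=
  ∀ k < n, r (f k) (f (k + 1))

theorem IsPath.imp (h : IsPath r n f) (hrs : ∀ a b, r a b → s a b) : IsPath s n f :=
  fun k hk => hrs _ _ (h k hk)

theorem IsPath.of_le (h : IsPath r n f) {m : ℕ} (hm : m ≤ n) : IsPath r m f :=
  fun k hk => h k (by omega)

theorem IsPath.drop (h : IsPath r n f) (k : ℕ) : IsPath r (n - k) (fun t => f (k + t)) :=
  fun t ht => h (k + t) (by omega)

theorem exists_isPath_of_reflTransGen {a b : α} (h : Relation.ReflTransGen r a b) :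
    ∃ n f, f 0 = a ∧ f n = b ∧ IsPath r n f := by
  induction h with
  | refl => exact ⟨0, fun _ => a, rfl, rfl, nofun⟩
  | @tail b c _ hbc ih =>
    obtain ⟨n, f, hf0, hfn, hf⟩ := ih
    refine ⟨n + 1, fun k => if k ≤ n then f k else c, by simpa using hf0, by simp, ?_⟩
    intro k hk
    rcases Nat.lt_or_ge k n with hkn | hkn
    · simpa [hkn.le, Nat.succ_le_of_lt hkn] using hf k hkn
    · obtain rfl : k = n := by omega
      simpa [hfn] using hbc

end Path

def ltPref (ρ : N → O → ℕ) : N → O → O → Prop := fun i x y => ρ i x < ρ i y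

section Plane

variable {ρ : N → O → ℕ} {i j : N} {a b c w x y z p : O}

def Improves (ρ : N → O → ℕ) (i j : N) (a b : O) : Prop := ρ i a < ρ i b ∨ ρ j a < ρ j b

theorem Improves.symm (h : Improves ρ i j a b) : Improves ρ j i a b := Or.symm h

theorem OutOfPattern.not_main (h : OutOfPattern (ltPref ρ)) (h₁ : ρ i a < ρ i b)
    (h₂ : ρ i b < ρ i c) (h₃ : ρ j b < ρ j c) (h₄ : ρ j c < ρ j a) : False :=
  h.1 i j a b c ⟨h₁, h₂, h₃, h₄⟩

theorem OutOfPattern.not_secondary (h : OutOfPattern (ltPref ρ)) (h₁ : ρ i w < ρ i x)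
    (h₂ : ρ i x < ρ i y) (h₃ : ρ i y < ρ i z) (h₄ : ρ j x = ρ j z) (h₅ : ρ j z < ρ j w)
    (h₆ : ρ j w = ρ j y) : False :=
  h.2 i j w x y z ⟨h₁, h₂, h₃, by simp only [Incomp, ltPref]; omega, h₅,
    by simp only [Incomp, ltPref]; omega⟩

def OnBoundary (ρ : N → O → ℕ) (i j : N) (x y p : O) : Prop :=
  ρ i p ≤ ρ i x ∧ ρ j y ≤ ρ j p ∧ (ρ i p = ρ i x ∨ ρ j p = ρ j y)

theorem onBoundary_of_not_lt (hρ : OutOfPattern (ltPref ρ)) (hi : ρ i x < ρ i y)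
    (hj : ρ j x < ρ j y) (habove : ¬ (ρ i x < ρ i p ∧ ρ j x < ρ j p))
    (hbelow : ¬ (ρ i p < ρ i y ∧ ρ j p < ρ j y)) :
    OnBoundary ρ i j x y p ∨ OnBoundary ρ j i x y p := by
  have hcorner : (ρ i p ≤ ρ i x ∧ ρ j y ≤ ρ j p) ∨ (ρ j p ≤ ρ j x ∧ ρ i y ≤ ρ i p) := by omega
  rcases hcorner with ⟨h₁, h₂⟩ | ⟨h₁, h₂⟩
  · refine .inl ⟨h₁, h₂, ?_⟩
    by_contra! h
    exact hρ.not_main (i := i) (j := j) (by omega) hi hj (by omega : ρ j y < ρ j p)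
  · refine .inr ⟨h₁, h₂, ?_⟩
    by_contra! h
    exact hρ.not_main (i := j) (j := i) (by omega) hj hi (by omega : ρ i y < ρ i p)

theorem false_of_onBoundary_one (hρ : OutOfPattern (ltPref ρ)) {n : ℕ} {f : ℕ → O}
    (hf : IsPath (Improves ρ i j) n f) (hi : ρ i (f n) < ρ i (f 0)) (hj : ρ j (f n) < ρ j (f 0))
    (hbd : ∀ k, 0 < k → k < n →
      OnBoundary ρ i j (f n) (f 0) (f k) ∨ OnBoundary ρ j i (f n) (f 0) (f k))
    (h₁ : OnBoundary ρ j i (f n) (f 0) (f 1)) : False := by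
  obtain ⟨_, _, _⟩ := h₁
  have hn : 2 ≤ n := by
    by_contra! hn
    interval_cases n <;> omega
  have hf₁ : ρ i (f 0) < ρ i (f 1) ∧ ρ j (f 1) = ρ j (f n) := by
    have := hf 0 (by omega)
    simp only [Improves, zero_add] at this
    omega
  have hlast : Improves ρ i j (f (n - 1)) (f n) := by
    simpa [Nat.sub_add_cancel (by omega : 1 ≤ n)] using hf (n - 1) (by omega)
  rcases hbd (n - 1) (by omega) (by omega) with ⟨_, _, _⟩ | ⟨_, _, _⟩
  · exact hρ.not_secondary (w := f (n - 1)) (i := i) (j := j)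
      (by rcases hlast with h | h <;> omega) hi hf₁.1 hf₁.2.symm (by omega)
      (by rcases hlast with h | h <;> omega)
  obtain ⟨hb_i, hb_j⟩ : ρ i (f (n - 1)) = ρ i (f 0) ∧ ρ j (f (n - 1)) < ρ j (f n) := by
    rcases hlast with h | h <;> omega
  -- `f 1` lies on the line `ρ j · = ρ j (f n)`, `f (n - 1)` below it: the path leaves it somewhere.
  obtain ⟨k, hk₁, hkn, hk, hk'⟩ := exists_lt_and_not_succ (P := fun k => ρ j (f k) = ρ j (f n))
    (by omega : 1 ≤ n - 1) hf₁.2 (by omega)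
  have hstep := hf k (by omega)
  rcases hbd k (by omega) (by omega) with ⟨_, _, _⟩ | ⟨_, _, _⟩
  · omega
  rcases hbd (k + 1) (by omega) (by omega) with ⟨_, _, _⟩ | ⟨_, _, _⟩
  · by_cases hd : ρ j (f (k + 1)) = ρ j (f 0)
    · exact hρ.not_main (a := f (k + 1)) (b := f (n - 1)) (c := f 1) (i := i) (j := j)
        (by omega) (by omega) (by omega) (by omega)
    · exact hρ.not_secondary (w := f (n - 1)) (x := f n) (y := f 0) (z := f (k + 1))
        (i := j) (j := i) hb_j hj (by omega) (by omega) (by omega) hb_i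
  · simp only [Improves] at hstep
    omega

theorem not_isPath_improves (hρ : OutOfPattern (ltPref ρ)) (n : ℕ) (f : ℕ → O)
    (hf : IsPath (Improves ρ i j) n f) (hi : ρ i (f n) < ρ i (f 0))
    (hj : ρ j (f n) < ρ j (f 0)) : False := by
  induction n using Nat.strong_induction_on generalizing f with
  | _ n ih =>
  -- By minimality, no intermediate outcome dominates `f n` or is dominated by `f 0`.
  have hbd : ∀ k, 0 < k → k < n →
      OnBoundary ρ i j (f n) (f 0) (f k) ∨ OnBoundary ρ j i (f n) (f 0) (f k) := by
    intro k hk hkn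
    refine onBoundary_of_not_lt hρ hi hj (fun ⟨h₁, h₂⟩ => ?_)
      (fun ⟨h₁, h₂⟩ => ih k hkn f (hf.of_le hkn.le) h₁ h₂)
    refine ih (n - k) (by omega) _ (hf.drop k) ?_ ?_ <;>
      simpa [Nat.add_sub_cancel' hkn.le]
  have hn : 1 < n := by
    obtain _ | _ | n := n
    · omega
    · have := hf 0 one_pos
      simp only [Improves] at this
      omega
    · omega
  rcases hbd 1 one_pos hn with h₁ | h₁
  · exact false_of_onBoundary_one (i := j) (j := i) hρ (hf.imp fun _ _ => Improves.symm) hj hi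
      (fun k hk hkn => (hbd k hk hkn).symm) h₁
  · exact false_of_onBoundary_one hρ hf hi hj hbd h₁

theorem not_reflTransGen_improves (hρ : OutOfPattern (ltPref ρ)) (hi : ρ i x < ρ i y)
    (hj : ρ j x < ρ j y) : ¬ Relation.ReflTransGen (Improves ρ i j) y x := by
  intro h
  obtain ⟨n, f, rfl, rfl, hf⟩ := exists_isPath_of_reflTransGen h
  exact not_isPath_improves hρ n f hf hi hj

end Plane

section Rank

variable {α : Type} {le : α → α → Prop} {x y : α}

noncomputable def lowerCount (le : α → α → Prop) (x : α) : ℕ := {z | le z x ∧ ¬ le x z}.ncard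

variable [IsTrans α le]

theorem lowerCount_subset (h : le x y) :
    {z | le z x ∧ ¬ le x z} ⊆ {z | le z y ∧ ¬ le y z} :=
  fun _ ⟨hzx, hxz⟩ => ⟨_root_.trans hzx h, fun hyz => hxz (_root_.trans h hyz)⟩

variable [Finite α]

theorem lowerCount_le_lowerCount (h : le x y) : lowerCount le x ≤ lowerCount le y :=
  Set.ncard_le_ncard (lowerCount_subset h)

theorem lowerCount_lt_lowerCount (h : le x y) (h' : ¬ le y x) :
    lowerCount le x < lowerCount le y :=
  Set.ncard_lt_ncard <| (Set.ssubset_iff_of_subset (lowerCount_subset h)).2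
    ⟨x, ⟨h, h'⟩, fun ⟨hxx, hnxx⟩ => hnxx hxx⟩

end Rank

theorem IsSWO.exists_rank [Finite O] {r : O → O → Prop} (hr : IsSWO r) :
    ∃ ρ : O → ℕ, ∀ x y, r x y ↔ ρ x < ρ y := by
  obtain ⟨hirr, htr, hinc⟩ := hr
  have : IsTrans O (fun a b => ¬ r b a) := ⟨fun a b c hba hcb hca => by
    by_cases hbc : r b c
    · exact hba (htr _ _ _ hbc hca)
    by_cases hab : r a b
    · exact hcb (htr _ _ _ hca hab)
    exact (hinc c b a ⟨hcb, hbc⟩ ⟨hba, hab⟩).1 hca⟩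
  refine ⟨lowerCount fun a b => ¬ r b a, fun x y => ⟨fun h => ?_, fun h => ?_⟩⟩
  · exact lowerCount_lt_lowerCount (fun hyx => hirr _ (htr _ _ _ h hyx)) (not_not.2 h)
  · by_contra hxy
    exact (lowerCount_le_lowerCount hxy).not_gt h

section Lex

variable {β : Type} [LinearOrder β]

theorem isSLO_of_injective {f : O → β} (hf : Function.Injective f) :
    IsSLO fun x y => f x < f y :=
  ⟨fun _ => lt_irrefl _, fun _ _ _ => lt_trans, fun _ _ hxy => lt_or_gt_of_ne (hf.ne hxy)⟩

def lexPair (ℓ : O → ℕ) (ψ : O → β) : Fin 2 → O → O → Prop :=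
  ![fun x y => toLex (ℓ x, ψ x) < toLex (ℓ y, ψ y),
    fun x y => toLex (ℓ x, OrderDual.toDual (ψ x)) < toLex (ℓ y, OrderDual.toDual (ψ y))]

variable {ℓ : O → ℕ} {ψ : O → β} {x y : O}

@[simp]
theorem lexPair_zero : lexPair ℓ ψ 0 x y ↔ ℓ x < ℓ y ∨ ℓ x = ℓ y ∧ ψ x < ψ y :=
  Prod.Lex.toLex_lt_toLex

@[simp]
theorem lexPair_one : lexPair ℓ ψ 1 x y ↔ ℓ x < ℓ y ∨ ℓ x = ℓ y ∧ ψ y < ψ x :=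
  Prod.Lex.toLex_lt_toLex

theorem isSLO_lexPair (hψ : Function.Injective ψ) (i : Fin 2) : IsSLO (lexPair ℓ ψ i) := by
  fin_cases i
  · exact isSLO_of_injective (f := fun x => toLex (ℓ x, ψ x))
      fun x y h => hψ (Prod.ext_iff.1 (toLex.injective h)).2
  · exact isSLO_of_injective (f := fun x => toLex (ℓ x, OrderDual.toDual (ψ x)))
      fun x y h => hψ (OrderDual.toDual.injective (Prod.ext_iff.1 (toLex.injective h)).2)

theorem canBeLayered_lexPair : CanBeLayered (lexPair ℓ ψ) := by
  refine ⟨ℓ, fun x y hxy i hyx => ?_, fun i j w x y z hwx hxy hyz h => ?_⟩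
  · fin_cases i <;> simp at hyx <;> omega
  · fin_cases i <;> fin_cases j <;> simp [hwx, hxy, hyz] at h <;> order

end Lex

theorem CanBeLayered.of_imp {pref pref' : N → O → O → Prop} (h : CanBeLayered pref')
    (himp : ∀ i x y, pref i x y → pref' i x y) : CanBeLayered pref :=
  let ⟨ℓ, hup, hin⟩ := h
  ⟨ℓ, fun x y hxy i hyx => hup x y hxy i (himp _ _ _ hyx),
    fun i j w x y z hwx hxy hyz ⟨h₁, h₂, h₃, h₄⟩ =>
      hin i j w x y z hwx hxy hyz ⟨himp _ _ _ h₁, himp _ _ _ h₂, himp _ _ _ h₃, himp _ _ _ h₄⟩⟩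

theorem outOfPattern_of_canBeLayered {ρ : N → O → ℕ} (h : CanBeLayered (ltPref ρ)) :
    OutOfPattern (ltPref ρ) := by
  obtain ⟨ℓ, hup, hin⟩ := h
  have hmono : ∀ i x y, ltPref ρ i x y → ℓ x ≤ ℓ y :=
    fun i x y hxy => not_lt.1 fun hyx => hup y x hyx i hxy
  refine ⟨fun i j x y z ⟨h₁, h₂, h₃, h₄⟩ => ?_, fun i j w x y z ⟨h₁, h₂, h₃, h₄, h₅, h₆⟩ => ?_⟩
  · have := hmono i x y h₁; have := hmono i y z h₂; have := hmono j z x h₄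
    exact hin i j x y z z (by omega) (by omega) (by omega)
      ⟨h₂, h₃, lt_trans (α := ℕ) h₁ h₂, h₄⟩
  · have := hmono i w x h₁; have := hmono i x y h₂; have := hmono i y z h₃
    have := hmono j z w h₅
    simp only [Incomp, ltPref] at *
    exact hin i j w x y z (by omega) (by omega) (by omega) ⟨h₂, by omega, by omega, h₅⟩

theorem exists_layered_linear_extension [Finite O] {ρ : Fin 2 → O → ℕ}
    (hρ : OutOfPattern (ltPref ρ)) :
    ∃ pref' : Fin 2 → O → O → Prop, (∀ i, IsSLO (pref' i)) ∧
      (∀ i x y, ltPref ρ i x y → pref' i x y) ∧ CanBeLayered pref' := by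
  set ℓ := lowerCount (Relation.ReflTransGen (Improves ρ 0 1))
  have hℓ_le : ∀ x y, Improves ρ 0 1 x y → ℓ x ≤ ℓ y :=
    fun x y hxy => lowerCount_le_lowerCount (.single hxy)
  have hℓ_eq : ∀ x y, ℓ x = ℓ y → ¬ (ρ 0 x < ρ 0 y ∧ ρ 1 x < ρ 1 y) := fun x y hxy h =>
    (lowerCount_lt_lowerCount (.single (.inl h.1)) (not_reflTransGen_improves hρ h.1 h.2)).ne hxy
  obtain ⟨e, he⟩ := Countable.exists_injective_nat O
  let ψ : O → ℤ ×ₗ ℕ := fun x => toLex ((ρ 0 x : ℤ) - ρ 1 x, e x)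
  have hψ : Function.Injective ψ := fun x y h => he (Prod.ext_iff.1 (toLex.injective h)).2
  refine ⟨lexPair ℓ ψ, isSLO_lexPair hψ, Fin.forall_fin_two.2 ⟨fun x y hxy => ?_,
    fun x y hxy => ?_⟩, canBeLayered_lexPair⟩
  · have := hℓ_le x y (.inl hxy)
    have := hℓ_eq x y
    simp only [ltPref] at hxy
    simp only [lexPair_zero, Prod.Lex.toLex_lt_toLex, ψ]
    omega
  · have := hℓ_le x y (.inr hxy)
    have := hℓ_eq x y
    simp only [ltPref] at hxy
    simp only [lexPair_one, Prod.Lex.toLex_lt_toLex, ψ]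
    omega

end SeqGame.GameTree

open SeqGame GameTree in
/-- For two players with strict weak order preferences: out of pattern ↔
existence of layerable strict linear extensions ↔ layerable. -/
theorem stmt_14 {O : Type} [Finite O] (pref : Fin 2 → O → O → Prop)
    (hswo : ∀ i, IsSWO (pref i)) :
    (OutOfPattern pref ↔
      ∃ pref' : Fin 2 → O → O → Prop,
        (∀ i, IsSLO (pref' i)) ∧ (∀ i x y, pref i x y → pref' i x y) ∧
        CanBeLayered pref') ∧
    (OutOfPattern pref ↔ CanBeLayered pref) := by
  choose ρ hρ using fun i => (hswo i).exists_rank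
  obtain rfl : pref = ltPref ρ := by
    funext i x y
    exact propext (hρ i x y)
  have hlin : OutOfPattern (ltPref ρ) → ∃ pref' : Fin 2 → O → O → Prop,
      (∀ i, IsSLO (pref' i)) ∧ (∀ i x y, ltPref ρ i x y → pref' i x y) ∧ CanBeLayered pref' :=
    exists_layered_linear_extension
  have hlayer : (∃ pref' : Fin 2 → O → O → Prop, (∀ i, IsSLO (pref' i)) ∧
      (∀ i x y, ltPref ρ i x y → pref' i x y) ∧ CanBeLayered pref') → CanBeLayered (ltPref ρ) :=
    fun ⟨_, _, himp, h⟩ => h.of_imp himp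
  exact ⟨⟨hlin, fun h => outOfPattern_of_canBeLayered (hlayer h)⟩,
    ⟨fun h => hlayer (hlin h), outOfPattern_of_canBeLayered⟩⟩
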